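/- arXiv:1509.02008 — 3 statements merged into one kernel-verified Lean document; each statement's English description precedes it below -/
import Mathlib

section
/- For every v_h ∈ V_{0h} (a finite-dimensional subspace of H^{1,1}(Q) of functions vanishing on Σ ∪ Σ_0, with ∂_t v_h having spatial weak gradients), the discrete bilinear form a_h(v_h,v_h) = ∫_Q (∂_t v_h · v_h + θh (∂_t v_h)² + |∇_x v_h|² + θh ∇_x v_h · ∇_x ∂_t v_h) dx dt satisfies a_h(v_h,v_h) ≥ ‖∇_x v_h‖²_{L²(Q)} + θh ‖∂_t v_h‖²_{L²(Q)} + ½‖v_h‖²_{L²(Σ_T)}, i.e. a_h is V_{0h}-elliptic with ellipticity constant μ_c = 1 with respect to the norm ‖·‖_h. -/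
open MeasureTheory

/-- The time derivative `∂_t v` of a function on the space-time domain `ℝ^d × ℝ`. -/
noncomputable def pderivT {d : ℕ} (v : (Fin d → ℝ) × ℝ → ℝ) (p : (Fin d → ℝ) × ℝ) : ℝ :=
  fderiv ℝ v p (0, 1)

/-- The `i`-th spatial partial derivative `∂_{x_i} v`. -/
noncomputable def pderivX {d : ℕ} (i : Fin d) (v : (Fin d → ℝ) × ℝ → ℝ)
    (p : (Fin d → ℝ) × ℝ) : ℝ :=
  fderiv ℝ v p (Pi.single i 1, 0)

/-- Coercivity (`V_{0h}`-ellipticity with constant `μ_c = 1`) of the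
discrete bilinear form
`a_h(v,v) = ∫_Q (∂_t v · v + θh(∂_t v)² + |∇_x v|² + θh ∇_x v · ∇_x ∂_t v)`:
for every `v` of the IgA space `V_{0h}` (vanishing together with its spatial
gradient on `Σ_0 = Ω × {0}`, and smooth enough for Gauss' theorem — the two Gauss
identities are hypothesized, using that `n_t = 0` on the lateral boundary `Σ`),
`a_h(v,v) ≥ ‖∇_x v‖²_{L²(Q)} + θh‖∂_t v‖²_{L²(Q)} + ½‖v‖²_{L²(Σ_T)} = ‖v‖_h²`. -/
theorem discrete_bilinear_form_coercivity
    {d : ℕ} (Ω : Set (Fin d → ℝ)) (hΩmeas : MeasurableSet Ω)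
    (T θ h : ℝ) (hT : 0 < T) (hθ : 0 < θ) (hh : 0 < h)
    (Q : Set ((Fin d → ℝ) × ℝ)) (hQ : Q = Ω ×ˢ Set.Ioo 0 T)
    (v : (Fin d → ℝ) × ℝ → ℝ)
    (hGauss1 : (∫ p in Q, v p * pderivT v p)
      = (1 / 2) * ((∫ x in Ω, (v (x, T)) ^ 2) - ∫ x in Ω, (v (x, 0)) ^ 2))
    (hGauss2 : (∫ p in Q, ∑ i, pderivX i v p * pderivT (fun q => pderivX i v q) p)
      = (1 / 2) * ((∫ x in Ω, ∑ i, (pderivX i v (x, T)) ^ 2)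
          - ∫ x in Ω, ∑ i, (pderivX i v (x, 0)) ^ 2))
    (hv0 : ∀ x ∈ Ω, v (x, 0) = 0)
    (hgrad0 : ∀ x ∈ Ω, ∀ i, pderivX i v (x, 0) = 0)
    (hint1 : IntegrableOn (fun p => pderivT v p * v p) Q)
    (hint2 : IntegrableOn (fun p => (pderivT v p) ^ 2) Q)
    (hint3 : IntegrableOn (fun p => ∑ i, (pderivX i v p) ^ 2) Q)
    (hint4 : IntegrableOn
      (fun p => ∑ i, pderivX i v p * pderivT (fun q => pderivX i v q) p) Q)
    (hint5 : IntegrableOn (fun x => ∑ i, (pderivX i v (x, T)) ^ 2) Ω) :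
    (∫ p in Q, (pderivT v p * v p + θ * h * (pderivT v p) ^ 2
        + (∑ i, (pderivX i v p) ^ 2)
        + θ * h * ∑ i, pderivX i v p * pderivT (fun q => pderivX i v q) p))
      ≥ (∫ p in Q, ∑ i, (pderivX i v p) ^ 2)
        + θ * h * (∫ p in Q, (pderivT v p) ^ 2)
        + (1 / 2) * ∫ x in Ω, (v (x, T)) ^ 2 := by
  have hz1 : (∫ x in Ω, (v (x, 0)) ^ 2) = 0 := by
    rw [MeasureTheory.setIntegral_congr_fun hΩmeas
      (fun x hx => by simp [hv0 x hx] : Set.EqOn (fun x => (v (x, 0)) ^ 2) 0 Ω)]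
    simp
  have hz2 : (∫ x in Ω, ∑ i, (pderivX i v (x, 0)) ^ 2) = 0 := by
    rw [MeasureTheory.setIntegral_congr_fun hΩmeas
      (fun x hx => by simp [hgrad0 x hx] :
        Set.EqOn (fun x => ∑ i, (pderivX i v (x, 0)) ^ 2) 0 Ω)]
    simp
  have h1 : (∫ p in Q, pderivT v p * v p) = (1 / 2) * ∫ x in Ω, (v (x, T)) ^ 2 := by
    rw [show (fun p => pderivT v p * v p) = (fun p => v p * pderivT v p) from
      funext fun p => mul_comm _ _, hGauss1, hz1]; ring
  have h4 : (∫ p in Q, ∑ i, pderivX i v p * pderivT (fun q => pderivX i v q) p)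
      = (1 / 2) * ∫ x in Ω, ∑ i, (pderivX i v (x, T)) ^ 2 := by
    rw [hGauss2, hz2]; ring
  have h5 : (0 : ℝ) ≤ ∫ x in Ω, ∑ i, (pderivX i v (x, T)) ^ 2 :=
    MeasureTheory.setIntegral_nonneg hΩmeas fun x _ =>
      Finset.sum_nonneg fun i _ => sq_nonneg _
  rw [MeasureTheory.integral_add (by exact (hint1.add (hint2.const_mul _)).add hint3)
        (by exact hint4.const_mul _),
      MeasureTheory.integral_add (by exact hint1.add (hint2.const_mul _)) hint3,
      MeasureTheory.integral_add hint1 (by exact hint2.const_mul _),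
      MeasureTheory.integral_const_mul, MeasureTheory.integral_const_mul,
      h1, h4]
  nlinarith [mul_pos hθ hh]
end

section
/- For the moving-domain bilinear form b_h(u,v) = ∫_Q (∂_t u·v + θh ∂_t u ∂_t v + ∇_x u·∇_x v − θh ∂_t∇_x u·∇_x v) dxdt + θh ∫_{Σ_T} ∇_x u·∇_x v ds, if 0 < θ < (2 C_{inv,1} C_u)^{-1}, then b_h(v_h, v_h) ≥ ½ ‖v_h‖²_{h,m} for all v_h ∈ V_{0h}, where ‖v‖²_{h,m} = ‖∇_x v‖²_{L²(Q)} + θh‖∂_t v‖²_{L²(Q)} + ½‖v‖²_{L²(Σ_T)} + θh‖∇_x v‖²_{L²(Σ_T)}. -/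
/-!
Writing `‖v‖²_{h,m}` for the energy norm, the Gauss identity turns `b_h(v, v)` into
`‖v‖²_{h,m} - θh (∂_t ∇_x v, ∇_x v)`. By Cauchy–Schwarz and the inverse inequality the
perturbation is at most `θ C_{inv,1} C_u ‖∇_x v‖²`, which the smallness of `θ` bounds by
`½ ‖∇_x v‖² ≤ ½ ‖v‖²_{h,m}`.
-/

open scoped RealInnerProductSpace

theorem real_inner_le_mul_norm_sq_of_norm_le {F : Type*} [NormedAddCommGroup F]
    [InnerProductSpace ℝ F] {x y : F} {c : ℝ} (hxy : ‖x‖ ≤ c * ‖y‖) :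
    ⟪x, y⟫ ≤ c * ‖y‖ ^ 2 :=
  calc ⟪x, y⟫ ≤ ‖x‖ * ‖y‖ := real_inner_le_norm x y
    _ ≤ c * ‖y‖ * ‖y‖ := mul_le_mul_of_nonneg_right hxy (norm_nonneg y)
    _ = c * ‖y‖ ^ 2 := by ring

theorem mul_real_inner_le_half_norm_sq_of_inverse_estimate {F : Type*} [NormedAddCommGroup F]
    [InnerProductSpace ℝ F] {θ h C : ℝ} {x y : F} (hθ : 0 < θ) (hh : 0 < h)
    (hθsmall : θ < (2 * C)⁻¹) (hInv : ‖x‖ ≤ C * h⁻¹ * ‖y‖) :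
    θ * h * ⟪x, y⟫ ≤ 1 / 2 * ‖y‖ ^ 2 := by
  have hC : 0 < 2 * C := inv_pos.mp (hθ.trans hθsmall)
  have hθC : θ * (2 * C) < 1 := (lt_div_iff₀ hC).mp (by rwa [one_div])
  calc θ * h * ⟪x, y⟫ ≤ θ * h * (C * h⁻¹ * ‖y‖ ^ 2) :=
        mul_le_mul_of_nonneg_left (real_inner_le_mul_norm_sq_of_norm_le hInv) (by positivity)
    _ = θ * (2 * C) * (1 / 2 * ‖y‖ ^ 2) := by field_simp
    _ ≤ 1 / 2 * ‖y‖ ^ 2 := mul_le_of_le_one_left (by positivity) hθC.le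

theorem moving_domain_coercivity_general
    {H F B Fb : Type*}
    [NormedAddCommGroup H] [InnerProductSpace ℝ H]
    [NormedAddCommGroup F] [InnerProductSpace ℝ F]
    [NormedAddCommGroup B] [InnerProductSpace ℝ B]
    [NormedAddCommGroup Fb] [InnerProductSpace ℝ Fb]
    (θ h Cu Cinv : ℝ) (hθ : 0 < θ) (hh : 0 < h)
    (hθsmall : θ < (2 * Cinv * Cu)⁻¹)
    (vQ Dv : H) (Gv DGv : F) (vT : B) (GvT : Fb)
    (hGauss : ⟪Dv, vQ⟫ = (1 / 2) * ‖vT‖ ^ 2)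
    (hInv : ‖DGv‖ ≤ Cinv * Cu * h⁻¹ * ‖Gv‖) :
    ⟪Dv, vQ⟫ + θ * h * ‖Dv‖ ^ 2 + ‖Gv‖ ^ 2 - θ * h * ⟪DGv, Gv⟫ + θ * h * ‖GvT‖ ^ 2
      ≥ (1 / 2) *
        (‖Gv‖ ^ 2 + θ * h * ‖Dv‖ ^ 2 + (1 / 2) * ‖vT‖ ^ 2 + θ * h * ‖GvT‖ ^ 2) := by
  have hPerturbation : θ * h * ⟪DGv, Gv⟫ ≤ 1 / 2 * ‖Gv‖ ^ 2 :=
    mul_real_inner_le_half_norm_sq_of_inverse_estimate hθ hh (by rwa [← mul_assoc]) hInv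
  have hθh : 0 ≤ θ * h := by positivity
  rw [hGauss]
  linarith [mul_nonneg hθh (sq_nonneg ‖Dv‖), mul_nonneg hθh (sq_nonneg ‖GvT‖), sq_nonneg ‖vT‖]

/-- Coercivity of the moving-domain bilinear form
`b_h(v,v) = (∂_t v, v)_{L²(Q)} + θh‖∂_t v‖² + ‖∇_x v‖² − θh(∂_t ∇_x v, ∇_x v)
+ θh‖∇_x v‖²_{L²(Σ_T)} ≥ ½‖v‖²_{h,m}` for `0 < θ < (2 C_{inv,1} C_u)⁻¹`.
Here `vQ` is the function, `Dv = ∂_t v`, `Gv = ∇_x v`, `DGv = ∂_t ∇_x v` (all in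
`L²(Q)`-type inner product spaces `H`, `F`), `vT = v|_{Σ_T}`, `GvT = ∇_x v|_{Σ_T}`
(in `L²(Σ_T)`-type spaces `B`, `Fb`). Hypotheses: the Gauss identity
`(∂_t v, v)_{L²(Q)} = ½‖v‖²_{L²(Σ_T)}` (valid since `v ∈ V_{0h}` vanishes on
`Σ ∪ Σ_0`), and the global inverse inequality
`‖∂_t ∇_x v‖ ≤ C_{inv,1} C_u h⁻¹ ‖∇_x v‖`. -/
theorem moving_domain_coercivity
    {H F B Fb : Type*}
    [NormedAddCommGroup H] [InnerProductSpace ℝ H]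
    [NormedAddCommGroup F] [InnerProductSpace ℝ F]
    [NormedAddCommGroup B] [InnerProductSpace ℝ B]
    [NormedAddCommGroup Fb] [InnerProductSpace ℝ Fb]
    (θ h Cu Cinv : ℝ) (hθ : 0 < θ) (hh : 0 < h) (hCu : 0 < Cu) (hCinv : 0 < Cinv)
    (hθsmall : θ < (2 * Cinv * Cu)⁻¹)
    (vQ Dv : H) (Gv DGv : F) (vT : B) (GvT : Fb)
    (hGauss : ⟪Dv, vQ⟫ = (1 / 2) * ‖vT‖ ^ 2)
    (hInv : ‖DGv‖ ≤ Cinv * Cu * h⁻¹ * ‖Gv‖) :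
    ⟪Dv, vQ⟫ + θ * h * ‖Dv‖ ^ 2 + ‖Gv‖ ^ 2 - θ * h * ⟪DGv, Gv⟫ + θ * h * ‖GvT‖ ^ 2
      ≥ (1 / 2) *
        (‖Gv‖ ^ 2 + θ * h * ‖Dv‖ ^ 2 + (1 / 2) * ‖vT‖ ^ 2 + θ * h * ‖GvT‖ ^ 2) :=
  moving_domain_coercivity_general θ h Cu Cinv hθ hh hθsmall vQ Dv Gv DGv vT GvT hGauss hInv
end

section
/- The moving-domain bilinear form b_h satisfies the boundedness estimate |b_h(u, v_h)| ≤ 2 ‖u‖_{h,m,*} ‖v_h‖_{h,m} for all u ∈ V_{0h,*} and v_h ∈ V_{0h}, where ‖v‖²_{h,m,*} = ‖v‖²_{h,m} + (θh)^{-1}‖v‖²_{L²(Q)} + θ²h²‖∂_t ∇_x v‖²_{L²(Q)}. -/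
/-!
After integrating `(∂ₜu, v)` by parts, `b_h(u, v)` is a sum of six inner products. Each is bounded
by Cauchy–Schwarz by a product `aᵢ bᵢ` of norms, where the weights `(θh)^{±1/2}` are distributed so
that `∑ aᵢ² ≤ 2 ‖u‖²_{h,m,*}` and `∑ bᵢ² ≤ 2 ‖v‖²_{h,m}`; the discrete Cauchy–Schwarz inequality
for the six pairs then gives the bound.
-/

open scoped RealInnerProductSpace

open Finset in
theorem abs_sum_le_sqrt_mul_sqrt_of_abs_le_mul {ι : Type*} (s : Finset ι) {t a b : ι → ℝ}
    (h : ∀ i ∈ s, |t i| ≤ a i * b i) :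
    |∑ i ∈ s, t i| ≤ √(∑ i ∈ s, a i ^ 2) * √(∑ i ∈ s, b i ^ 2) :=
  (abs_sum_le_sum_abs t s).trans <| (sum_le_sum h).trans <| Real.sum_mul_le_sqrt_mul_sqrt s a b

/-- Boundedness of the moving-domain bilinear form
`|b_h(u, v_h)| ≤ 2 ‖u‖_{h,m,*} ‖v_h‖_{h,m}`, where
`b_h(u,v) = (∂_t u, v) + θh(∂_t u, ∂_t v) + (∇_x u, ∇_x v) − θh(∂_t∇_x u, ∇_x v)
+ θh(∇_x u, ∇_x v)_{Σ_T}`,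
`‖v‖²_{h,m} = ‖∇_x v‖² + θh‖∂_t v‖² + ½‖v‖²_{Σ_T} + θh‖∇_x v‖²_{Σ_T}` and
`‖v‖²_{h,m,*} = ‖v‖²_{h,m} + (θh)⁻¹‖v‖²_{L²(Q)} + θ²h²‖∂_t∇_x v‖²`.
Here `uQ, vQ` are the functions, `Du, Dv` their time derivatives, `Gu, Gv` their
spatial gradients, `DGu = ∂_t∇_x u`, `uT, vT` traces on `Σ_T`, `GuT, GvT` gradient
traces on `Σ_T`. The hypothesis is the integration-by-parts identity
`(∂_t u, v) = −(u, ∂_t v) + (u, v)_{Σ_T}` (valid since `v_h` vanishes on `Σ ∪ Σ_0`). -/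
theorem moving_domain_boundedness
    {H F B Fb : Type*}
    [NormedAddCommGroup H] [InnerProductSpace ℝ H]
    [NormedAddCommGroup F] [InnerProductSpace ℝ F]
    [NormedAddCommGroup B] [InnerProductSpace ℝ B]
    [NormedAddCommGroup Fb] [InnerProductSpace ℝ Fb]
    (θ h : ℝ) (hθ : 0 < θ) (hh : 0 < h)
    (uQ vQ Du Dv : H) (Gu Gv DGu : F) (uT vT : B) (GuT GvT : Fb)
    (hParts : ⟪Du, vQ⟫ = -⟪uQ, Dv⟫ + ⟪uT, vT⟫) :
    |⟪Du, vQ⟫ + θ * h * ⟪Du, Dv⟫ + ⟪Gu, Gv⟫ - θ * h * ⟪DGu, Gv⟫ + θ * h * ⟪GuT, GvT⟫|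
      ≤ 2 *
        Real.sqrt ((‖Gu‖ ^ 2 + θ * h * ‖Du‖ ^ 2 + (1 / 2) * ‖uT‖ ^ 2 + θ * h * ‖GuT‖ ^ 2)
            + (θ * h)⁻¹ * ‖uQ‖ ^ 2 + θ ^ 2 * h ^ 2 * ‖DGu‖ ^ 2) *
        Real.sqrt (‖Gv‖ ^ 2 + θ * h * ‖Dv‖ ^ 2 + (1 / 2) * ‖vT‖ ^ 2 + θ * h * ‖GvT‖ ^ 2) := by
  have hc : 0 < θ * h := mul_pos hθ hh
  set s := √(θ * h)
  have hs : s ^ 2 = θ * h := Real.sq_sqrt hc.le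
  have hs0 : s ≠ 0 := (Real.sqrt_pos.2 hc).ne'
  set U := (‖Gu‖ ^ 2 + θ * h * ‖Du‖ ^ 2 + (1 / 2) * ‖uT‖ ^ 2 + θ * h * ‖GuT‖ ^ 2)
    + (θ * h)⁻¹ * ‖uQ‖ ^ 2 + θ ^ 2 * h ^ 2 * ‖DGu‖ ^ 2
  set V := ‖Gv‖ ^ 2 + θ * h * ‖Dv‖ ^ 2 + (1 / 2) * ‖vT‖ ^ 2 + θ * h * ‖GvT‖ ^ 2
  set t : Fin 6 → ℝ := ![-⟪uQ, Dv⟫, ⟪uT, vT⟫, θ * h * ⟪Du, Dv⟫, ⟪Gu, Gv⟫, -(θ * h * ⟪DGu, Gv⟫),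
    θ * h * ⟪GuT, GvT⟫]
  set a : Fin 6 → ℝ := ![s⁻¹ * ‖uQ‖, ‖uT‖, s * ‖Du‖, ‖Gu‖, θ * h * ‖DGu‖, s * ‖GuT‖]
  set b : Fin 6 → ℝ := ![s * ‖Dv‖, ‖vT‖, s * ‖Dv‖, ‖Gv‖, ‖Gv‖, s * ‖GvT‖]
  have hsum : ⟪Du, vQ⟫ + θ * h * ⟪Du, Dv⟫ + ⟪Gu, Gv⟫ - θ * h * ⟪DGu, Gv⟫ + θ * h * ⟪GuT, GvT⟫
      = ∑ i, t i := by
    simp [Fin.sum_univ_six, t, hParts]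
    ring
  have hterm : ∀ i ∈ Finset.univ, |t i| ≤ a i * b i := by
    intro i _
    have hss : s * s = θ * h := by rw [← hs, sq]
    fin_cases i <;>
      simp [t, a, b, abs_mul, abs_of_pos hθ, abs_of_pos hh, mul_mul_mul_comm _ ‖_‖ s, hss, hs0,
        mul_assoc] <;>
      grw [abs_real_inner_le_norm]
  have ha : ∑ i, a i ^ 2 ≤ 2 * U := by
    simp [Fin.sum_univ_six, a, U, mul_pow, inv_pow, hs]
    exact sub_nonneg.1 (by ring_nf; positivity)
  have hb : ∑ i, b i ^ 2 ≤ 2 * V := by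
    simp [Fin.sum_univ_six, b, V, mul_pow, hs]
    exact sub_nonneg.1 (by ring_nf; positivity)
  rw [hsum]
  calc |∑ i, t i| ≤ √(∑ i, a i ^ 2) * √(∑ i, b i ^ 2) :=
        abs_sum_le_sqrt_mul_sqrt_of_abs_le_mul _ hterm
    _ ≤ √(2 * U) * √(2 * V) := by gcongr
    _ = 2 * √U * √V := by
      rw [Real.sqrt_mul zero_le_two, Real.sqrt_mul zero_le_two]
      linear_combination √U * √V * Real.mul_self_sqrt zero_le_two
end
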